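/- arXiv:1508.07022 — 3 statements merged into one kernel-verified Lean document; each statement's English description precedes it below -/
import Mathlib

section
/- Let (r_n), (s_n) be sequences of integers and (q_n) a nondecreasing sequence of positive integers; set α_n = (r_n/q_n, s_n/q_n) ∈ ℝ². Assume for every n: |r_{n+1}/q_{n+1} − r_n/q_n| < 1/(2^{n+1} q_n) and |s_{n+1}/q_{n+1} − s_n/q_n| < 1/(2^{n+1} q_n), and the orbit {k·α_{n+1} mod ℤ² : k ∈ ℤ} of the rotation by α_{n+1} is (1/2^{n+1})-dense in T² = ℝ²/ℤ². Then the sequence (α_n) converges to some α ∈ ℝ², every orbit of the translation z ↦ z + α on T² is dense, and α is totally irrational, i.e. 1, α₁, α₂ are linearly independent over ℚ. -/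
/-!
The estimates make `α n` Cauchy, with limit `a` satisfying `dist (α n) a ≤ 1 / (2 ^ n * q n)`.
Since `q (n+1) • α (n+1) ∈ ℤ²`, the orbit of `α (n+1)` is swept out by `k • α (n+1)` with
`0 ≤ k < q (n+1)`, and for such `k` the points `k • a` and `k • α (n+1)` are `1/2^(n+1)`-close
on the torus; so the orbit of `a` is `1/2^n`-dense for every `n`, i.e. dense.
Total irrationality follows from this minimality: an integer relation `A + B a₁ + C a₂ = 0`
makes the continuous character `(u, v) ↦ B u + C v` of the torus vanish on the dense orbit
of `a`, hence everywhere, which forces `B = C = 0`.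
-/

open Filter

/-- The projection from the plane to the torus `T² = ℝ²/ℤ²`. -/
noncomputable def torusProj (z : ℝ × ℝ) : AddCircle (1:ℝ) × AddCircle (1:ℝ) :=
  ((z.1 : AddCircle (1:ℝ)), (z.2 : AddCircle (1:ℝ)))

open Topology Metric

section FastConvergence

variable {X : Type*} [PseudoMetricSpace X] {f : ℕ → X} {q : ℕ → ℝ}

lemma dist_succ_le_geometric (hq₀ : 0 < q 0) (hq : Monotone q)
    (hf : ∀ n, dist (f n) (f (n + 1)) ≤ 1 / (2 ^ (n + 1) * q n)) (n k : ℕ) :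
    dist (f (k + n)) (f (k + 1 + n)) ≤ 1 / (2 ^ (n + 1) * q n) * (1 / 2) ^ k := by
  have hqn : 0 < q n := hq₀.trans_le (hq n.zero_le)
  calc dist (f (k + n)) (f (k + 1 + n)) ≤ 1 / (2 ^ (k + n + 1) * q (k + n)) := by
        rw [add_right_comm]; exact hf _
    _ ≤ 1 / (2 ^ (k + n + 1) * q n) := by gcongr; exact hq (Nat.le_add_left n k)
    _ = 1 / (2 ^ (n + 1) * q n) * (1 / 2) ^ k := by
      rw [one_div_pow, pow_add, pow_add]; field_simp; ring

lemma cauchySeq_of_dist_succ_le (hq₀ : 0 < q 0) (hq : Monotone q)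
    (hf : ∀ n, dist (f n) (f (n + 1)) ≤ 1 / (2 ^ (n + 1) * q n)) : CauchySeq f :=
  cauchySeq_of_le_geometric _ _ (by norm_num : (1 / 2 : ℝ) < 1) fun n => by
    simpa using dist_succ_le_geometric hq₀ hq hf 0 n

lemma dist_le_of_tendsto_of_dist_succ_le (hq₀ : 0 < q 0) (hq : Monotone q)
    (hf : ∀ n, dist (f n) (f (n + 1)) ≤ 1 / (2 ^ (n + 1) * q n)) {a : X}
    (ha : Tendsto f atTop (𝓝 a)) (n : ℕ) : dist (f n) a ≤ 1 / (2 ^ n * q n) := by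
  have := dist_le_of_le_geometric_of_tendsto₀ _ _ (by norm_num : (1 / 2 : ℝ) < 1)
    (dist_succ_le_geometric hq₀ hq hf n) ((tendsto_add_atTop_iff_nat n).2 ha)
  rw [zero_add] at this
  convert this using 1
  rw [pow_succ]; field_simp; norm_num

end FastConvergence

lemma torusProj_intCast_smul (k : ℤ) (x : ℝ × ℝ) :
    torusProj ((k : ℝ) • x) = k • torusProj x := by
  simp [torusProj, ← zsmul_eq_mul]

lemma nsmul_torusProj_div_eq_zero (m n : ℤ) {N : ℕ} (hN : 0 < N) :
    N • torusProj ((m : ℝ) / N, (n : ℝ) / N) = 0 := by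
  have hN' : (N : ℝ) ≠ 0 := by positivity
  rw [← natCast_zsmul, ← torusProj_intCast_smul]
  simp [torusProj, mul_div_cancel₀ _ hN']

lemma dist_torusProj_le (x y : ℝ × ℝ) : dist (torusProj x) (torusProj y) ≤ dist x y := by
  rw [torusProj, torusProj, Prod.dist_eq, dist_eq_norm, dist_eq_norm, ← AddCircle.coe_sub,
    ← AddCircle.coe_sub]
  exact max_le_max QuotientAddGroup.norm_mk_le_norm QuotientAddGroup.norm_mk_le_norm

section Orbits

variable {G : Type*} [SeminormedAddCommGroup G]

lemma exists_dist_zsmul_le_of_approx {P Q : G} {N : ℕ} (hN : 0 < N) (hQN : N • Q = 0)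
    {ε δ : ℝ} (hQ : ∀ w, ∃ k : ℤ, dist w (k • Q) ≤ ε) (hPQ : N * dist P Q ≤ δ) (w : G) :
    ∃ k : ℤ, dist w (k • P) ≤ ε + δ := by
  obtain ⟨k, hk⟩ := hQ w
  have hN' : (0 : ℤ) < N := by exact_mod_cast hN
  refine ⟨k % N, ?_⟩
  have hk_mod : (k % N) • Q = k • Q := by
    conv_rhs => rw [← Int.emod_add_mul_ediv k N]
    rw [add_zsmul, mul_comm, mul_zsmul, natCast_zsmul, hQN, zsmul_zero, add_zero]
  have hk_le : |((k % N : ℤ) : ℝ)| ≤ N := by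
    rw [← Int.cast_abs, abs_of_nonneg (Int.emod_nonneg k hN'.ne')]
    exact_mod_cast (Int.emod_lt_of_pos k hN').le
  have h_shift : dist ((k % N) • Q) ((k % N) • P) ≤ N * dist P Q := by
    rw [dist_eq_norm, ← zsmul_sub, dist_comm, dist_eq_norm]
    exact (norm_zsmul_le _ _).trans (by rw [Int.norm_eq_abs]; gcongr)
  calc dist w ((k % N) • P) ≤ dist w ((k % N) • Q) + dist ((k % N) • Q) ((k % N) • P) :=
        dist_triangle _ _ _
    _ ≤ ε + δ := by rw [hk_mod] at h_shift ⊢; linarith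

lemma denseRange_of_forall_exists_dist_le {α β : Type*} [PseudoMetricSpace α] {f : β → α}
    (h : ∀ n : ℕ, ∀ x, ∃ y, dist x (f y) ≤ 1 / 2 ^ n) : DenseRange f := by
  refine Metric.denseRange_iff.2 fun x ε hε => ?_
  obtain ⟨n, hn⟩ := exists_pow_lt_of_lt_one hε (by norm_num : (1 / 2 : ℝ) < 1)
  obtain ⟨y, hy⟩ := h n x
  rw [one_div_pow] at hn
  exact ⟨y, hy.trans_lt hn⟩

lemma dense_add_zsmul_of_denseRange {P : G} (hP : DenseRange fun k : ℤ => k • P) (z : G) :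
    Dense {w | ∃ k : ℤ, w = z + k • P} := by
  have : Dense (Set.range ((z + ·) ∘ fun k : ℤ => k • P)) :=
    (Homeomorph.addLeft z).surjective.denseRange.comp hP (continuous_const_add z)
  convert this using 1
  ext w
  simp [eq_comm]

end Orbits

lemma AddMonoidHom.eq_zero_of_denseRange_zsmul {G H : Type*} [AddGroup G] [TopologicalSpace G]
    [AddGroup H] [TopologicalSpace H] [T2Space H] {P : G} (hP : DenseRange fun k : ℤ => k • P)
    (χ : G →+ H) (hχ : Continuous χ) (hχP : χ P = 0) : χ = 0 := by
  ext u
  exact congrFun (hP.equalizer hχ continuous_const (funext fun k => by simp [hχP])) u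

lemma eq_zero_of_forall_coe_intCast_mul_eq_zero {B : ℤ}
    (h : ∀ t : ℝ, ((B * t : ℝ) : AddCircle (1 : ℝ)) = 0) : B = 0 := by
  by_contra hB
  obtain ⟨m, hm⟩ := (AddCircle.coe_eq_zero_iff 1).1 (h (1 / (2 * B)))
  have : (2 * m : ℝ) = 1 := by
    rw [zsmul_eq_mul, mul_one] at hm
    rw [hm]; field_simp
  have : 2 * m = 1 := by exact_mod_cast this
  omega

def torusChar (B C : ℤ) : AddCircle (1 : ℝ) × AddCircle (1 : ℝ) →+ AddCircle (1 : ℝ) :=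
  B • AddMonoidHom.fst _ _ + C • AddMonoidHom.snd _ _

lemma continuous_torusChar (B C : ℤ) : Continuous (torusChar B C) :=
  (continuous_fst.zsmul B).add (continuous_snd.zsmul C)

lemma torusChar_torusProj (B C : ℤ) (x : ℝ × ℝ) :
    torusChar B C (torusProj x) = ((B * x.1 + C * x.2 : ℝ) : AddCircle (1 : ℝ)) := by
  simp [torusChar, torusProj, ← zsmul_eq_mul]

lemma linearIndependent_of_denseRange_zsmul_torusProj {a : ℝ × ℝ}
    (ha : DenseRange fun k : ℤ => k • torusProj a) : LinearIndependent ℚ ![1, a.1, a.2] := by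
  rw [← LinearIndependent.iff_fractionRing ℤ ℚ, Fintype.linearIndependent_iff]
  intro g hg
  simp only [Fin.sum_univ_three, Matrix.cons_val_zero, Matrix.cons_val_one,
    Matrix.cons_val_two, Matrix.head_cons, Matrix.tail_cons, zsmul_eq_mul, mul_one] at hg
  have hχ : torusChar (g 1) (g 2) = 0 := by
    refine AddMonoidHom.eq_zero_of_denseRange_zsmul ha _ (continuous_torusChar _ _) ?_
    rw [torusChar_torusProj, show (g 1 * a.1 + g 2 * a.2 : ℝ) = ((-g 0 : ℤ) : ℝ) by
      push_cast; linarith]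
    simp
  have h1 : g 1 = 0 := eq_zero_of_forall_coe_intCast_mul_eq_zero fun t => by
    simpa [torusChar_torusProj] using DFunLike.congr_fun hχ (torusProj (t, 0))
  have h2 : g 2 = 0 := eq_zero_of_forall_coe_intCast_mul_eq_zero fun t => by
    simpa [torusChar_torusProj] using DFunLike.congr_fun hχ (torusProj (0, t))
  have h0 : g 0 = 0 := by simpa [h1, h2] using hg
  intro i; fin_cases i <;> assumption

/-- If the rational rotation vectors `α n = (r n / q n, s n / q n)` satisfy the
fast-approximation estimates and the rotation by `α (n+1)` has `(1/2^(n+1))`-dense orbits,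
then `α n` converges to a limit `α` which is totally irrational and whose associated
torus translation is minimal. -/
theorem limit_rotation_totally_irrational
    (r s : ℕ → ℤ) (q : ℕ → ℕ) (hq : ∀ n, 0 < q n) (hqmono : Monotone q)
    (α : ℕ → ℝ × ℝ)
    (hα : ∀ n, α n = ((r n : ℝ) / (q n : ℝ), (s n : ℝ) / (q n : ℝ)))
    (hr : ∀ n, |(r (n+1) : ℝ) / (q (n+1) : ℝ) - (r n : ℝ) / (q n : ℝ)| < 1 / (2^(n+1) * (q n : ℝ)))
    (hs : ∀ n, |(s (n+1) : ℝ) / (q (n+1) : ℝ) - (s n : ℝ) / (q n : ℝ)| < 1 / (2^(n+1) * (q n : ℝ)))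
    (hdense : ∀ n, ∀ w : AddCircle (1:ℝ) × AddCircle (1:ℝ),
      ∃ k : ℤ, dist w (torusProj ((k : ℝ) • α (n+1))) ≤ 1 / 2^(n+1)) :
    ∃ a : ℝ × ℝ, Tendsto α atTop (nhds a) ∧
      (∀ z : AddCircle (1:ℝ) × AddCircle (1:ℝ),
        Dense {w | ∃ k : ℤ, w = z + torusProj ((k : ℝ) • a)}) ∧
      LinearIndependent ℚ ![(1 : ℝ), a.1, a.2] := by
  have hq₀ : (0 : ℝ) < q 0 := by exact_mod_cast hq 0
  have hqR : Monotone fun n => (q n : ℝ) := Nat.mono_cast.comp hqmono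
  have hstep : ∀ n, dist (α n) (α (n + 1)) ≤ 1 / (2 ^ (n + 1) * (q n : ℝ)) := fun n => by
    simp only [hα, Prod.dist_eq, Real.dist_eq, abs_sub_comm ((r n : ℝ) / q n),
      abs_sub_comm ((s n : ℝ) / q n)]
    exact max_le (hr n).le (hs n).le
  obtain ⟨a, ha⟩ := cauchySeq_tendsto_of_complete (cauchySeq_of_dist_succ_le hq₀ hqR hstep)
  have horbit : DenseRange fun k : ℤ => k • torusProj a := by
    refine denseRange_of_forall_exists_dist_le fun n w => ?_
    have hQ : ∀ w, ∃ k : ℤ, dist w (k • torusProj (α (n + 1))) ≤ 1 / 2 ^ (n + 1) := by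
      simpa only [torusProj_intCast_smul] using hdense n
    have hQN : q (n + 1) • torusProj (α (n + 1)) = 0 := by
      rw [hα]; exact nsmul_torusProj_div_eq_zero _ _ (hq _)
    have hPQ : q (n + 1) * dist (torusProj a) (torusProj (α (n + 1))) ≤ 1 / 2 ^ (n + 1) :=
      calc (q (n + 1) : ℝ) * dist (torusProj a) (torusProj (α (n + 1)))
          _ ≤ q (n + 1) * (1 / (2 ^ (n + 1) * q (n + 1))) := by
            rw [dist_comm]
            gcongr
            exact (dist_torusProj_le _ _).trans
              (dist_le_of_tendsto_of_dist_succ_le hq₀ hqR hstep ha _)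
          _ = 1 / 2 ^ (n + 1) := by field_simp [(hq (n + 1)).ne']
    obtain ⟨k, hk⟩ := exists_dist_zsmul_le_of_approx (hq _) hQN hQ hPQ w
    exact ⟨k, hk.trans_eq (by rw [pow_succ]; ring)⟩
  refine ⟨a, ha, fun z => ?_, linearIndependent_of_denseRange_zsmul_torusProj horbit⟩
  simpa only [torusProj_intCast_smul] using dense_add_zsmul_of_denseRange horbit z
end

section
/- Let X be a compact metric space and f : X → X a continuous map. Suppose there exist sequences of maps g_n : X → X and positive integers q_n such that for every n ≥ 1: (i) for every z ∈ X the finite set {g_n^i(z) : 0 ≤ i < q_n} is (1/n)-dense in X; and (ii) sup_{z ∈ X} max_{0 ≤ i ≤ q_n} d(f^i(z), g_n^i(z)) ≤ 1/n. Then every forward orbit {f^i(z) : i ∈ ℕ} is dense in X; in particular, if f is a homeomorphism, f is minimal. -/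
/-- If a continuous map `f` on a compact metric space is approximated, for every `n ≥ 1`,
by a map `g n` during the time `q n` within precision `1/n`, and every `(q n)`-segment of
orbit of `g n` is `(1/n)`-dense, then every forward orbit of `f` is dense. -/
theorem dense_orbits_of_approximation {X : Type*} [MetricSpace X] [CompactSpace X]
    (f : X → X) (hf : Continuous f)
    (g : ℕ → X → X) (q : ℕ → ℕ) (hq : ∀ n, 0 < q n)
    (hdense : ∀ n, 1 ≤ n → ∀ z w : X, ∃ i : ℕ, i < q n ∧ dist w ((g n)^[i] z) ≤ 1 / n)
    (happrox : ∀ n, 1 ≤ n → ∀ z : X, ∀ i : ℕ, i ≤ q n →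
      dist (f^[i] z) ((g n)^[i] z) ≤ 1 / n) :
    ∀ z : X, Dense (Set.range fun i : ℕ => f^[i] z) := by
  intro z
  apply Metric.denseRange_iff.mpr
  intro w ε hε
  obtain ⟨n, hn⟩ := exists_nat_gt (2 / ε)
  have hn1 : 1 ≤ n := by
    by_contra h
    push_neg at h
    interval_cases n
    · simp at hn
      linarith [div_pos (by norm_num : (0:ℝ) < 2) hε]
  have hnpos : (0:ℝ) < n := by exact_mod_cast hn1
  have h2n : 2 / (n:ℝ) < ε := by
    rw [div_lt_iff₀ hnpos]
    rw [div_lt_iff₀ hε] at hn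
    linarith
  obtain ⟨i, hi, hdi⟩ := hdense n hn1 z w
  refine ⟨i, ?_⟩
  have hap := happrox n hn1 z i hi.le
  calc dist w (f^[i] z) ≤ dist w ((g n)^[i] z) + dist ((g n)^[i] z) (f^[i] z) :=
        dist_triangle _ _ _
    _ ≤ 1 / n + 1 / n := add_le_add hdi (dist_comm (f^[i] z) ((g n)^[i] z) ▸ hap)
    _ = 2 / n := by ring
    _ < ε := h2n
end

section
/- Let N ≥ 5 and let U = {U_ℓ : ℓ ∈ ℤ/Nℤ} be a circular chain of open arcs in the circle T¹ = ℝ/ℤ, each of diameter less than 1/4, whose union is all of T¹. Let (Û_i)_{i ∈ ℤ} be a lift of U, i.e. each Û_i is a connected component of π⁻¹(U_{i mod N}) for the projection π : ℝ → ℝ/ℤ, and Û_i ∩ Û_j ≠ ∅ if and only if i − j ∈ {−1, 0, 1}. Then there exists a nonzero integer v such that Û_{i+N} = Û_i + v for all i ∈ ℤ, and v does not depend on i nor on the choice of the lift (Û_i). -/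
/-!
An arc of diameter `< 1/4` misses the antipode of each of its points, so the component of
`π⁻¹(U_ℓ)` through `c` is the part of `π⁻¹(U_ℓ)` in `(c - 1/2, c + 1/2)` (the image of `U_ℓ` under a
continuous section of `π`); it lies within `1/4` of `c`, and any two components are integer
translates of each other. Hence two lifts satisfy `Ŵ'_i = Ŵ_i + m_i`, and since consecutive sets
meet and have width `< 1/2`, `m_i = m_{i+1}`. Applied to `Û` and its shift `i ↦ Û_{i+N}`, itself a
lift, this gives `v`; it is nonzero because `Û_N` and `Û_0` are disjoint, and it does not depend on
the lift because every other lift is a translate of `Û`.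
-/

open Set Metric

/-- `Û` is a lift to `ℝ` of the circular chain `U` of subsets of the circle `ℝ/ℤ`:
each `Û i` is a connected component of the preimage of `U (i mod N)` under the
projection `π : ℝ → ℝ/ℤ`, and `Û i` meets `Û j` iff `i − j ∈ {−1,0,1}`. -/
def IsChainLift (N : ℕ) (U : ZMod N → Set (AddCircle (1:ℝ))) (Uhat : ℤ → Set ℝ) : Prop :=
  (∀ i : ℤ, ∃ x ∈ Uhat i,
      Uhat i = connectedComponentIn ((fun r : ℝ => (r : AddCircle (1:ℝ))) ⁻¹' U (i : ZMod N)) x) ∧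
  (∀ i j : ℤ, (Uhat i ∩ Uhat j).Nonempty ↔ i - j ∈ ({-1, 0, 1} : Set ℤ))

namespace AddCircle

lemma dist_coe_coe_of_abs_sub_le {x y : ℝ} (h : |x - y| ≤ 1 / 2) :
    dist (x : AddCircle (1 : ℝ)) y = |x - y| := by
  rw [dist_eq_norm, ← coe_sub]
  exact (norm_coe_eq_abs_iff (p := 1) one_ne_zero).mpr (by simpa using h)

lemma exists_int_abs_sub_lt_of_dist_coe_lt {x y r : ℝ} (h : dist (x : AddCircle (1 : ℝ)) y < r) :
    ∃ m : ℤ, |x - (y + m)| < r := by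
  rw [dist_eq_norm, ← coe_sub, UnitAddCircle.norm_eq] at h
  exact ⟨round (x - y), by rwa [← sub_sub]⟩

variable {S : Set (AddCircle (1 : ℝ))}

lemma isPreconnected_preimage_coe_inter_Ioo (hS : IsPreconnected S) {a : ℝ}
    (ha : (a : AddCircle (1 : ℝ)) ∉ S) :
    IsPreconnected ((↑) ⁻¹' S ∩ Ioo a (a + 1)) := by
  let e := openPartialHomeomorphCoe (1 : ℝ) a
  have hSe : S ⊆ e.target := fun s hs h => ha (h ▸ hs)
  have := hS.image _ (e.continuousOn_symm.mono hSe)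
  rwa [e.symm_image_eq_source_inter_preimage hSe, inter_comm] at this

lemma connectedComponentIn_preimage_coe (hS : IsPreconnected S) {c : ℝ}
    (hc : (c : AddCircle (1 : ℝ)) ∈ S) (hc' : ((c + 1 / 2 : ℝ) : AddCircle (1 : ℝ)) ∉ S) :
    connectedComponentIn ((↑) ⁻¹' S) c = (↑) ⁻¹' S ∩ Ioo (c - 1 / 2) (c + 1 / 2) := by
  have hcoe : ((c - 1 / 2 : ℝ) : AddCircle (1 : ℝ)) = ((c + 1 / 2 : ℝ) : AddCircle (1 : ℝ)) := by
    rw [show c + 1 / 2 = c - 1 / 2 + (1 : ℤ) by push_cast; ring]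
    simp
  refine subset_antisymm (subset_inter (connectedComponentIn_subset _ _) fun z hz => ?_) ?_
  · have hcomp := isPreconnected_connectedComponentIn (F := (↑) ⁻¹' S) (x := c)
    have hcc := mem_connectedComponentIn (F := ((↑) ⁻¹' S : Set ℝ)) hc
    have hend : ∀ e ∈ connectedComponentIn ((↑) ⁻¹' S) c,
        (e : AddCircle (1 : ℝ)) ≠ ((c + 1 / 2 : ℝ) : AddCircle (1 : ℝ)) :=
      fun e he h => hc' (h ▸ connectedComponentIn_subset ((↑) ⁻¹' S) c he)
    constructor
    · by_contra! h
      exact hend _ (hcomp.Icc_subset hz hcc ⟨h, by linarith⟩) hcoe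
    · by_contra! h
      exact hend _ (hcomp.Icc_subset hcc hz ⟨by linarith, h⟩) rfl
  · have hpiece := isPreconnected_preimage_coe_inter_Ioo hS (a := c - 1 / 2) (by rwa [hcoe])
    rw [show c - 1 / 2 + 1 = c + 1 / 2 by ring] at hpiece
    exact hpiece.subset_connectedComponentIn ⟨hc, by constructor <;> linarith⟩ inter_subset_left

lemma dist_coe_lt_of_diam_lt {r : ℝ} (hdiam : diam S < r) {x y : ℝ}
    (hx : (x : AddCircle (1 : ℝ)) ∈ S) (hy : (y : AddCircle (1 : ℝ)) ∈ S) :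
    dist (x : AddCircle (1 : ℝ)) y < r :=
  (dist_le_diam_of_mem isBounded_of_compactSpace hx hy).trans_lt hdiam

lemma coe_add_half_notMem (hdiam : diam S < 1 / 2) {c : ℝ} (hc : (c : AddCircle (1 : ℝ)) ∈ S) :
    ((c + 1 / 2 : ℝ) : AddCircle (1 : ℝ)) ∉ S := fun h => by
  have := dist_coe_lt_of_diam_lt hdiam h hc
  rw [dist_coe_coe_of_abs_sub_le (by norm_num)] at this
  norm_num at this

lemma abs_sub_lt_of_mem_connectedComponentIn (hS : IsPreconnected S) {r : ℝ} (hdiam : diam S < r)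
    (hr : r ≤ 1 / 2) {c z : ℝ} (hc : (c : AddCircle (1 : ℝ)) ∈ S)
    (hz : z ∈ connectedComponentIn ((↑) ⁻¹' S) c) : |z - c| < r := by
  rw [connectedComponentIn_preimage_coe hS hc (coe_add_half_notMem (hdiam.trans_le hr) hc)] at hz
  obtain ⟨hzS, hz₁, hz₂⟩ := hz
  rw [← dist_coe_coe_of_abs_sub_le (abs_le.mpr ⟨by linarith, by linarith⟩)]
  exact dist_coe_lt_of_diam_lt hdiam hzS hc

lemma image_add_int_connectedComponentIn_preimage_coe {x : ℝ} (hx : (x : AddCircle (1 : ℝ)) ∈ S)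
    (m : ℤ) : (· + (m : ℝ)) '' connectedComponentIn ((↑) ⁻¹' S) x =
      connectedComponentIn ((↑) ⁻¹' S) (x + m) := by
  have hS : (· + (m : ℝ)) '' ((↑) ⁻¹' S) = ((↑) ⁻¹' S : Set ℝ) := by
    ext z
    simp [image_add_right]
  have := (Homeomorph.addRight (m : ℝ)).image_connectedComponentIn (s := (↑) ⁻¹' S) hx
  rwa [Homeomorph.coe_addRight, hS] at this

end AddCircle

def IsPreimageComponent (S : Set (AddCircle (1 : ℝ))) (A : Set ℝ) : Prop :=
  ∃ x ∈ A, A = connectedComponentIn ((↑) ⁻¹' S) x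

namespace IsPreimageComponent

variable {S : Set (AddCircle (1 : ℝ))} {A B : Set ℝ}

lemma abs_sub_lt (hA : IsPreimageComponent S A) (hS : IsPreconnected S) {r : ℝ}
    (hdiam : diam S < r) (hr : r ≤ 1 / 2) {a b : ℝ} (ha : a ∈ A) (hb : b ∈ A) :
    |a - b| < 2 * r := by
  obtain ⟨x, hxA, rfl⟩ := hA
  have hx : (x : AddCircle (1 : ℝ)) ∈ S := connectedComponentIn_subset ((↑) ⁻¹' S) x hxA
  have ha' := abs_lt.mp (AddCircle.abs_sub_lt_of_mem_connectedComponentIn hS hdiam hr hx ha)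
  have hb' := abs_lt.mp (AddCircle.abs_sub_lt_of_mem_connectedComponentIn hS hdiam hr hx hb)
  exact abs_lt.mpr ⟨by linarith, by linarith⟩

lemma exists_eq_image_add_int (hA : IsPreimageComponent S A) (hB : IsPreimageComponent S B)
    (hS : IsPreconnected S) (hdiam : diam S < 1 / 2) :
    ∃ m : ℤ, B = (· + (m : ℝ)) '' A := by
  obtain ⟨x, hxA, rfl⟩ := hA
  obtain ⟨y, hyB, rfl⟩ := hB
  have hx : (x : AddCircle (1 : ℝ)) ∈ S := connectedComponentIn_subset ((↑) ⁻¹' S) x hxA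
  have hy : (y : AddCircle (1 : ℝ)) ∈ S := connectedComponentIn_subset ((↑) ⁻¹' S) y hyB
  obtain ⟨m, hm⟩ :=
    AddCircle.exists_int_abs_sub_lt_of_dist_coe_lt (AddCircle.dist_coe_lt_of_diam_lt hdiam hy hx)
  have hxm : x + m ∈ connectedComponentIn ((↑) ⁻¹' S) y := by
    rw [AddCircle.connectedComponentIn_preimage_coe hS hy (AddCircle.coe_add_half_notMem hdiam hy)]
    obtain ⟨h₁, h₂⟩ := abs_lt.mp hm
    exact ⟨by simpa using hx, by linarith, by linarith⟩
  exact ⟨m, by rw [AddCircle.image_add_int_connectedComponentIn_preimage_coe hx,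
    connectedComponentIn_eq hxm]⟩

end IsPreimageComponent

lemma eq_of_image_add_int_inter_nonempty {A B : Set ℝ} {m k : ℤ}
    (hA : ∀ a ∈ A, ∀ b ∈ A, |a - b| < 1 / 2) (hB : ∀ a ∈ B, ∀ b ∈ B, |a - b| < 1 / 2)
    (hAB : (A ∩ B).Nonempty) (h : ((· + (m : ℝ)) '' A ∩ (· + (k : ℝ)) '' B).Nonempty) :
    m = k := by
  obtain ⟨w, hwA, hwB⟩ := hAB
  obtain ⟨_, ⟨a, ha, rfl⟩, ⟨b, hb, hab⟩⟩ := h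
  have h₁ := abs_lt.mp (hA a ha w hwA)
  have h₂ := abs_lt.mp (hB b hb w hwB)
  have : |((m - k : ℤ) : ℝ)| < 1 := by
    push_cast
    exact abs_lt.mpr ⟨by linarith, by linarith⟩
  have := abs_lt.mp (show |m - k| < 1 by exact_mod_cast this)
  omega

namespace IsChainLift

variable {N : ℕ} {U : ZMod N → Set (AddCircle (1 : ℝ))} {W W' : ℤ → Set ℝ}

lemma isPreimageComponent (hW : IsChainLift N U W) (i : ℤ) :
    IsPreimageComponent (U i) (W i) :=
  hW.1 i

lemma inter_add_one_nonempty (hW : IsChainLift N U W) (i : ℤ) : (W i ∩ W (i + 1)).Nonempty :=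
  (hW.2 _ _).2 (by simp)

lemma comp_add_natCast (hW : IsChainLift N U W) : IsChainLift N U (fun i => W (i + N)) :=
  ⟨fun i => by simpa using hW.1 (i + N), fun i j => by simpa using hW.2 (i + N) (j + N)⟩

lemma exists_eq_image_add_int (hW : IsChainLift N U W) (hW' : IsChainLift N U W')
    (hU : ∀ ℓ, IsPreconnected (U ℓ)) (hdiam : ∀ ℓ, diam (U ℓ) < 1 / 4) :
    ∃ m : ℤ, ∀ i, W' i = (· + (m : ℝ)) '' W i := by
  choose m hm using fun i => (hW.isPreimageComponent i).exists_eq_image_add_int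
    (hW'.isPreimageComponent i) (hU _) ((hdiam _).trans (by norm_num))
  have hwidth (i : ℤ) : ∀ a ∈ W i, ∀ b ∈ W i, |a - b| < 1 / 2 := fun a ha b hb =>
    ((hW.isPreimageComponent i).abs_sub_lt (hU _) (hdiam _) (by norm_num) ha hb).trans_eq
      (by norm_num)
  have hm_periodic : Function.Periodic m 1 := fun i =>
    (eq_of_image_add_int_inter_nonempty (hwidth i) (hwidth (i + 1))
      (hW.inter_add_one_nonempty i) (by rw [← hm, ← hm]; exact hW'.inter_add_one_nonempty i)).symm
  refine ⟨m 0, fun i => ?_⟩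
  rw [hm i, show m i = m 0 by simpa using hm_periodic.int_mul_eq i]

end IsChainLift

theorem circular_chain_homotopy_type_general (N : ℕ) (hN : 5 ≤ N)
    (U : ZMod N → Set (AddCircle (1:ℝ)))
    (harc : ∀ ℓ, IsConnected (U ℓ))
    (hdiam : ∀ ℓ, Metric.diam (U ℓ) < 1/4)
    (Uhat : ℤ → Set ℝ) (hlift : IsChainLift N U Uhat) :
    ∃ v : ℤ, v ≠ 0 ∧
      ∀ Uhat' : ℤ → Set ℝ, IsChainLift N U Uhat' →
        ∀ i : ℤ, Uhat' (i + N) = (fun x => x + (v : ℝ)) '' Uhat' i := by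
  have hU : ∀ ℓ, IsPreconnected (U ℓ) := fun ℓ => (harc ℓ).isPreconnected
  obtain ⟨v, hv⟩ := hlift.exists_eq_image_add_int hlift.comp_add_natCast hU hdiam
  refine ⟨v, ?_, fun Uhat' hlift' i => ?_⟩
  · rintro rfl
    obtain ⟨x, hx, -⟩ := hlift.1 0
    have hNx : x ∈ Uhat (0 + N) := by rw [hv 0]; simpa using hx
    have := (hlift.2 _ _).1 ⟨x, hNx, hx⟩
    simp only [zero_add, sub_zero, mem_insert_iff, mem_singleton_iff] at this
    omega
  · obtain ⟨m, hm⟩ := hlift.exists_eq_image_add_int hlift' hU hdiam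
    rw [hm, hm, hv, image_image, image_image]
    simp only [add_right_comm]

/-- A circular chain of open arcs of diameter `< 1/4` covering the circle has a
well-defined nonzero homotopy type (winding number) `v`: any lift satisfies
`Û (i+N) = Û i + v`, with `v` independent of the lift. -/
theorem circular_chain_homotopy_type (N : ℕ) (hN : 5 ≤ N)
    (U : ZMod N → Set (AddCircle (1:ℝ)))
    (hopen : ∀ ℓ, IsOpen (U ℓ))
    (harc : ∀ ℓ, IsConnected (U ℓ))
    (hdiam : ∀ ℓ, Metric.diam (U ℓ) < 1/4)
    (hcover : (⋃ ℓ, U ℓ) = Set.univ)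
    (hchain : ∀ k ℓ : ZMod N, (U k ∩ U ℓ).Nonempty ↔ k - ℓ ∈ ({-1, 0, 1} : Set (ZMod N)))
    (Uhat : ℤ → Set ℝ) (hlift : IsChainLift N U Uhat) :
    ∃ v : ℤ, v ≠ 0 ∧
      ∀ Uhat' : ℤ → Set ℝ, IsChainLift N U Uhat' →
        ∀ i : ℤ, Uhat' (i + N) = (fun x => x + (v : ℝ)) '' Uhat' i :=
  circular_chain_homotopy_type_general N hN U harc hdiam Uhat hlift
end
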